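/- arXiv:1902.06192 — 2 statements merged into one kernel-verified Lean document; each statement's English description precedes it below -/
import Mathlib

section
/- For the two non-isomorphic counterexample graphs G₁ and G₂ (defined by middle-layer edges forming an 8-cycle versus two complete bipartite components), the iterative labeling algorithm produces identical label multisets at every iteration t; hence the graph invariant fails to distinguish them. -/
def outdeg {n : ℕ} (E : Fin n → Fin n → Bool) (i : Fin n) : ℕ :=
  (Finset.univ.filter (fun j => E i j)).card

def indeg {n : ℕ} (E : Fin n → Fin n → Bool) (i : Fin n) : ℕ :=
  (Finset.univ.filter (fun j => E j i)).card

/-- The type of labels after `t` iterations: at level 0 a triple of naturals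
(out-degree, in-degree, color); at level `t+1` a triple of (multiset of
out-neighbor labels, multiset of in-neighbor labels, previous label). -/
def LabelT : ℕ → Type
  | 0 => ℕ × ℕ × ℕ
  | t + 1 => Multiset (LabelT t) × Multiset (LabelT t) × LabelT t

/-- The iterative labeling: `H E c t i` is the label of vertex `i` after `t` iterations. -/
def H {n : ℕ} (E : Fin n → Fin n → Bool) (c : Fin n → ℕ) : (t : ℕ) → Fin n → LabelT t
  | 0, i => (outdeg E i, indeg E i, c i)
  | t + 1, i =>
      ((Finset.univ.filter (fun o => E i o)).val.map (H E c t),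
       (Finset.univ.filter (fun o => E o i)).val.map (H E c t),
       H E c t i)

/-- Edges of the first counterexample graph (0-based vertex names: paper's
vertex `v` is `v - 1` here).  Middle layer forms a single 8-cycle. -/
def L1 : List (ℕ × ℕ) :=
  [(0,1),(0,2),(0,3),(0,4),
   (1,5),(1,6),(2,6),(2,7),(3,7),(3,8),(4,8),(4,5),
   (5,9),(6,9),(7,9),(8,9)]

/-- Edges of the second counterexample graph: middle layer forms two
complete bipartite components. -/
def L2 : List (ℕ × ℕ) :=
  [(0,1),(0,2),(0,3),(0,4),
   (1,5),(1,6),(2,5),(2,6),(3,7),(3,8),(4,7),(4,8),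
   (5,9),(6,9),(7,9),(8,9)]

def E1 : Fin 10 → Fin 10 → Bool := fun i j => decide ((i.val, j.val) ∈ L1)
def E2 : Fin 10 → Fin 10 → Bool := fun i j => decide ((i.val, j.val) ∈ L2)

/-- Coloring: vertex 1 gets color 0, vertex 10 gets color 1,
vertices 2–5 get color 2, vertices 6–9 get color 3. -/
def c10 : Fin 10 → ℕ := fun i =>
  if i.val = 0 then 0 else if i.val = 9 then 1 else if i.val < 5 then 2 else 3


/-!
The colouring `c10` is an equitable partition of both graphs, with the same quotient: a vertex of
colour 2 has two out-neighbours of colour 3 and one in-neighbour of colour 0, a vertex of colour 3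
has one out-neighbour of colour 1 and two in-neighbours of colour 2, and so on. Whenever a colouring
is equitable, the labels `H E c t` are a function of the colour alone, computed on the quotient;
hence two graphs with the same quotient receive identical labels at every vertex and every iteration.
-/

/-- `c` is an equitable colouring of `E`, with quotient `(o, ι)`. -/
def HasColorQuotient {n : ℕ} (E : Fin n → Fin n → Bool) (c : Fin n → ℕ)
    (o ι : ℕ → Multiset ℕ) : Prop :=
  ∀ i, (Finset.univ.filter (fun j => E i j)).val.map c = o (c i) ∧
    (Finset.univ.filter (fun j => E j i)).val.map c = ι (c i)

def quotientLabel (o ι : ℕ → Multiset ℕ) : (t : ℕ) → ℕ → LabelT t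
  | 0, k => (Multiset.card (o k), Multiset.card (ι k), k)
  | t + 1, k => ((o k).map (quotientLabel o ι t), (ι k).map (quotientLabel o ι t),
      quotientLabel o ι t k)

theorem H_eq_quotientLabel_comp {n : ℕ} {E : Fin n → Fin n → Bool} {c : Fin n → ℕ}
    {o ι : ℕ → Multiset ℕ} (h : HasColorQuotient E c o ι) (t : ℕ) :
    H E c t = quotientLabel o ι t ∘ c := by
  funext i
  obtain ⟨hout, hin⟩ := h i
  rw [Function.comp_apply]
  cases t with
  | zero =>
    rw [H, quotientLabel, outdeg, indeg, ← hout, ← hin, Multiset.card_map, Multiset.card_map]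
    rfl
  | succ t =>
    rw [H, quotientLabel, H_eq_quotientLabel_comp h t, ← Multiset.map_map, ← Multiset.map_map,
      hout, hin, Function.comp_apply]

theorem H_eq_of_hasColorQuotient {n : ℕ} {E E' : Fin n → Fin n → Bool} {c : Fin n → ℕ}
    {o ι : ℕ → Multiset ℕ} (h : HasColorQuotient E c o ι) (h' : HasColorQuotient E' c o ι)
    (t : ℕ) : H E c t = H E' c t := by
  rw [H_eq_quotientLabel_comp h, H_eq_quotientLabel_comp h']

def layerOut : ℕ → Multiset ℕ
  | 0 => {2, 2, 2, 2}
  | 2 => {3, 3}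
  | 3 => {1}
  | _ => 0

def layerIn : ℕ → Multiset ℕ
  | 1 => {3, 3, 3, 3}
  | 2 => {0}
  | 3 => {2, 2}
  | _ => 0

theorem hasColorQuotient_E1 : HasColorQuotient E1 c10 layerOut layerIn := by
  unfold HasColorQuotient
  decide

theorem hasColorQuotient_E2 : HasColorQuotient E2 c10 layerOut layerIn := by
  unfold HasColorQuotient
  decide

/-- The iterative labeling produces identical label multisets on the two
non-isomorphic counterexample graphs at every iteration. -/
theorem counterexample_same_invariant :
    ∀ t : ℕ, Finset.univ.val.map (H E1 c10 t) = Finset.univ.val.map (H E2 c10 t) := by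
  intro t
  rw [H_eq_of_hasColorQuotient hasColorQuotient_E1 hasColorQuotient_E2 t]
end

section
/- In the counterexample graph G₁, at every iteration t of the labeling algorithm, vertices 2, 3, 4, 5 all receive the same label, and vertices 6, 7, 8, 9 all receive the same label. -/
/-!
Rotating the middle layer, `2 ↦ 3 ↦ 4 ↦ 5 ↦ 2` together with `6 ↦ 7 ↦ 8 ↦ 9 ↦ 6`
(`c[1, 2, 3, 4] * c[5, 6, 7, 8]` in the 0-based numbering), is an
automorphism of the coloured graph G₁ (the middle edges form a single 8-cycle). Each label `H t i`
is built only from the graph structure, so by induction on `t` it is invariant under automorphisms,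
hence constant along the orbits `{2, 3, 4, 5}` and `{6, 7, 8, 9}`.
-/

open Finset

section Automorphism

variable {n : ℕ} {E : Fin n → Fin n → Bool} {σ : Equiv.Perm (Fin n)}

lemma filter_adj_apply_perm (hE : ∀ i j, E (σ i) (σ j) = E i j) (i : Fin n) :
    univ.filter (fun o => E (σ i) o) = (univ.filter (fun o => E i o)).map σ.toEmbedding := by
  ext j
  obtain ⟨k, rfl⟩ := σ.surjective j
  simp [hE]

lemma filter_adj_apply_perm' (hE : ∀ i j, E (σ i) (σ j) = E i j) (i : Fin n) :
    univ.filter (fun o => E o (σ i)) = (univ.filter (fun o => E o i)).map σ.toEmbedding :=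
  filter_adj_apply_perm (E := flip E) (fun i j => hE j i) i

theorem H_apply_perm {c : Fin n → ℕ} (hE : ∀ i j, E (σ i) (σ j) = E i j)
    (hc : ∀ i, c (σ i) = c i) : ∀ t i, H E c t (σ i) = H E c t i
  | 0, i => by
    simp only [H, outdeg, indeg, filter_adj_apply_perm hE, filter_adj_apply_perm' hE, card_map, hc]
    rfl
  | t + 1, i => by
    have ih : H E c t ∘ σ = H E c t := funext (H_apply_perm hE hc t)
    simp only [H, filter_adj_apply_perm hE, filter_adj_apply_perm' hE, map_val, Multiset.map_map,
      Equiv.coe_toEmbedding, ih, H_apply_perm hE hc t i]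
    rfl

end Automorphism

open Equiv in
def rotateG1 : Perm (Fin 10) := c[1, 2, 3, 4] * c[5, 6, 7, 8]

lemma E1_rotateG1 (i j : Fin 10) : E1 (rotateG1 i) (rotateG1 j) = E1 i j := by
  revert i j; decide

lemma c10_rotateG1 (i : Fin 10) : c10 (rotateG1 i) = c10 i := by
  revert i; decide

/-- In G₁, at every iteration, vertices 2,3,4,5 (here 1,2,3,4) share a label
and vertices 6,7,8,9 (here 5,6,7,8) share a label. -/
theorem counterexample_equal_labels :
    ∀ t : ℕ,
      (H E1 c10 t 1 = H E1 c10 t 2 ∧ H E1 c10 t 1 = H E1 c10 t 3 ∧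
        H E1 c10 t 1 = H E1 c10 t 4) ∧
      (H E1 c10 t 5 = H E1 c10 t 6 ∧ H E1 c10 t 5 = H E1 c10 t 7 ∧
        H E1 c10 t 5 = H E1 c10 t 8) := by
  intro t
  have hrot := H_apply_perm E1_rotateG1 c10_rotateG1 t
  have h2 : H E1 c10 t 2 = H E1 c10 t 1 := hrot 1
  have h3 : H E1 c10 t 3 = H E1 c10 t 2 := hrot 2
  have h4 : H E1 c10 t 4 = H E1 c10 t 3 := hrot 3
  have h6 : H E1 c10 t 6 = H E1 c10 t 5 := hrot 5
  have h7 : H E1 c10 t 7 = H E1 c10 t 6 := hrot 6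
  have h8 : H E1 c10 t 8 = H E1 c10 t 7 := hrot 7
  simp only [h2, h3, h4, h6, h7, h8, and_self]
end
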